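/- arXiv:1902.03918 — 2 statements merged into one kernel-verified Lean document; each statement's English description precedes it below -/
import Mathlib

section
/- The charged Nariai spacetime is Ricci generalized projectively pseudosymmetric: it satisfies P·R = −(1/3) Q(S,R) identically, where P is the projective curvature tensor. -/
set_option linter.unreachableTactic false
set_option linter.unusedTactic false
set_option linter.unusedVariables false



noncomputable section

open Real

/-- Partial derivative of `f` in the `i`-th coordinate direction at the point `x`. -/
def pd (i : Fin 4) (f : (Fin 4 → ℝ) → ℝ) (x : Fin 4 → ℝ) : ℝ :=
  deriv (fun s => f (Function.update x i s)) (x i)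

/-- The charged Nariai metric: coordinates `x 0 = t`, `x 1 = r`, `x 2 = θ`, `x 3 = φ`;
nonzero components `g₁₁ = -(r₀²/L₀) sin² r`, `g₂₂ = r₀²/L₀`, `g₃₃ = r₀²`, `g₄₄ = r₀² sin² θ`. -/
def gCNS (r0 L0 : ℝ) (x : Fin 4 → ℝ) : Fin 4 → Fin 4 → ℝ := fun p q =>
  if p = 0 ∧ q = 0 then -(r0 ^ 2 / L0) * Real.sin (x 1) ^ 2
  else if p = 1 ∧ q = 1 then r0 ^ 2 / L0
  else if p = 2 ∧ q = 2 then r0 ^ 2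
  else if p = 3 ∧ q = 3 then r0 ^ 2 * Real.sin (x 2) ^ 2
  else 0

/-- Inverse of a diagonal metric. -/
def ginv (g : (Fin 4 → ℝ) → Fin 4 → Fin 4 → ℝ) (x : Fin 4 → ℝ) : Fin 4 → Fin 4 → ℝ :=
  fun p q => if p = q then (g x p p)⁻¹ else 0

/-- Christoffel symbols `Γ^a_{bc}` of the Levi-Civita connection of a diagonal metric. -/
def Chr (g : (Fin 4 → ℝ) → Fin 4 → Fin 4 → ℝ) (x : Fin 4 → ℝ) (a b c : Fin 4) : ℝ :=
  (1 / 2) * ∑ d : Fin 4, ginv g x a d *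
    (pd b (fun y => g y d c) x + pd c (fun y => g y d b) x - pd d (fun y => g y b c) x)

/-- Covariant derivative `∇_a T_{pq}` of a (0,2)-tensor field. -/
def covDeriv2 (g T : (Fin 4 → ℝ) → Fin 4 → Fin 4 → ℝ) (x : Fin 4 → ℝ) (a p q : Fin 4) : ℝ :=
  pd a (fun y => T y p q) x
    - ∑ e : Fin 4, Chr g x e a p * T x e q
    - ∑ e : Fin 4, Chr g x e a q * T x p e

/-- Covariant derivative `∇_a T_{pqrs}` of a (0,4)-tensor field. -/
def covDeriv4 (g : (Fin 4 → ℝ) → Fin 4 → Fin 4 → ℝ)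
    (T : (Fin 4 → ℝ) → Fin 4 → Fin 4 → Fin 4 → Fin 4 → ℝ)
    (x : Fin 4 → ℝ) (a p q r s : Fin 4) : ℝ :=
  pd a (fun y => T y p q r s) x
    - ∑ e : Fin 4, Chr g x e a p * T x e q r s
    - ∑ e : Fin 4, Chr g x e a q * T x p e r s
    - ∑ e : Fin 4, Chr g x e a r * T x p q e s
    - ∑ e : Fin 4, Chr g x e a s * T x p q r e

/-- Elementary (0,4)-tensor with the usual Riemann symmetries, supported on the
coordinate plane `(a,b)` and normalized so that its `(a,b,a,b)` component is `1`. -/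
def blk (a b : Fin 4) (p q r s : Fin 4) : ℝ :=
  (if p = a ∧ q = b then (1 : ℝ) else if p = b ∧ q = a then -1 else 0) *
  (if r = a ∧ s = b then (1 : ℝ) else if r = b ∧ s = a then -1 else 0)

/-- The (0,4) Riemann curvature tensor of the charged Nariai metric:
`R₁₂₁₂ = (r₀²/L₀) sin² r`, `R₃₄₃₄ = -r₀² sin² θ` (up to the Riemann symmetries). -/
def RCNS (r0 L0 : ℝ) (x : Fin 4 → ℝ) (p q r s : Fin 4) : ℝ :=
  (r0 ^ 2 / L0) * Real.sin (x 1) ^ 2 * blk 0 1 p q r s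
    + (-(r0 ^ 2) * Real.sin (x 2) ^ 2) * blk 2 3 p q r s

/-- The Ricci tensor of the charged Nariai metric:
`S₁₁ = sin² r`, `S₂₂ = S₃₃ = -1`, `S₄₄ = -sin² θ`. -/
def SCNS (x : Fin 4 → ℝ) : Fin 4 → Fin 4 → ℝ := fun p q =>
  if p = 0 ∧ q = 0 then Real.sin (x 1) ^ 2
  else if p = 1 ∧ q = 1 then -1
  else if p = 2 ∧ q = 2 then -1
  else if p = 3 ∧ q = 3 then -Real.sin (x 2) ^ 2
  else 0

/-- The scalar curvature of the charged Nariai metric: `κ = -2(1+L₀)/r₀²`. -/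
def κCNS (r0 L0 : ℝ) : ℝ := -2 * (1 + L0) / r0 ^ 2

/-- The coordinate domain of the charged Nariai chart: `0 < r < π`, `0 < θ < π`. -/
def CNSdom (x : Fin 4 → ℝ) : Prop :=
  0 < x 1 ∧ x 1 < Real.pi ∧ 0 < x 2 ∧ x 2 < Real.pi

/-- Kulkarni–Nomizu product of two symmetric (0,2)-tensors. -/
def KN (E A : Fin 4 → Fin 4 → ℝ) (p q r s : Fin 4) : ℝ :=
  E p s * A q r - E p r * A q s + E q r * A p s - E q s * A p r

/-- The (0,4) Weyl conformal curvature tensor of the charged Nariai metric. -/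
def CCNS (r0 L0 : ℝ) (x : Fin 4 → ℝ) (p q r s : Fin 4) : ℝ :=
  RCNS r0 L0 x p q r s
    + (1 / 2) * (gCNS r0 L0 x p s * SCNS x q r - gCNS r0 L0 x q s * SCNS x p r
        + SCNS x p s * gCNS r0 L0 x q r - SCNS x q s * gCNS r0 L0 x p r)
    - (κCNS r0 L0 / 6) * (gCNS r0 L0 x p s * gCNS r0 L0 x q r
        - gCNS r0 L0 x q s * gCNS r0 L0 x p r)

/-- The (0,4) projective curvature tensor of the charged Nariai metric (n = 4). -/
def PCNS (r0 L0 : ℝ) (x : Fin 4 → ℝ) (p q r s : Fin 4) : ℝ :=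
  RCNS r0 L0 x p q r s
    + (1 / 3) * (gCNS r0 L0 x p s * SCNS x q r - gCNS r0 L0 x q s * SCNS x p r)

/-- The (0,6)-tensor `(U·T)_{pqrs,uv}` built from two (0,4)-tensor fields. -/
def dot4 (g : (Fin 4 → ℝ) → Fin 4 → Fin 4 → ℝ)
    (U T : (Fin 4 → ℝ) → Fin 4 → Fin 4 → Fin 4 → Fin 4 → ℝ)
    (x : Fin 4 → ℝ) (p q r s u v : Fin 4) : ℝ :=
  - ∑ α : Fin 4, ∑ β : Fin 4, ginv g x α β *
      (U x u v p β * T x α q r s + U x u v q β * T x p α r s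
        + U x u v r β * T x p q α s + U x u v s β * T x p q r α)

/-- The Tachibana tensor `Q(Z,T)_{pqrs,uv}`. -/
def Qop (Z : Fin 4 → Fin 4 → ℝ) (T : Fin 4 → Fin 4 → Fin 4 → Fin 4 → ℝ)
    (p q r s u v : Fin 4) : ℝ :=
  Z v p * T u q r s + Z v q * T p u r s + Z v r * T p q u s + Z v s * T p q r u
    - Z u p * T v q r s - Z u q * T p v r s - Z u r * T p q v s - Z u s * T p q r v

/-- The Ricci operator `S^t_p = g^{tα} S_{αp}` of a metric `g` with Ricci tensor `S`. -/
def Sop (g S : (Fin 4 → ℝ) → Fin 4 → Fin 4 → ℝ) (x : Fin 4 → ℝ) (t p : Fin 4) : ℝ :=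
  ∑ a : Fin 4, ginv g x t a * S x a p


/-- Kronecker delta as a real number. -/
def kd (i j : Fin 4) : ℝ := if i = j then 1 else 0

lemma kd00 : kd 0 0 = 1 := by simp [kd] <;> decide
lemma kd01 : kd 0 1 = 0 := by simp [kd] <;> decide
lemma kd02 : kd 0 2 = 0 := by simp [kd] <;> decide
lemma kd03 : kd 0 3 = 0 := by simp [kd] <;> decide
lemma kd10 : kd 1 0 = 0 := by simp [kd] <;> decide
lemma kd11 : kd 1 1 = 1 := by simp [kd] <;> decide
lemma kd12 : kd 1 2 = 0 := by simp [kd] <;> decide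
lemma kd13 : kd 1 3 = 0 := by simp [kd] <;> decide
lemma kd20 : kd 2 0 = 0 := by simp [kd] <;> decide
lemma kd21 : kd 2 1 = 0 := by simp [kd] <;> decide
lemma kd22 : kd 2 2 = 1 := by simp [kd] <;> decide
lemma kd23 : kd 2 3 = 0 := by simp [kd] <;> decide
lemma kd30 : kd 3 0 = 0 := by simp [kd] <;> decide
lemma kd31 : kd 3 1 = 0 := by simp [kd] <;> decide
lemma kd32 : kd 3 2 = 0 := by simp [kd] <;> decide
lemma kd33 : kd 3 3 = 1 := by simp [kd] <;> decide

/-- Auxiliary tensor: the `(1/3)`-correction part of the projective tensor. -/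
def Wt (r0 L0 : ℝ) (x : Fin 4 → ℝ) (p q r s : Fin 4) : ℝ :=
  gCNS r0 L0 x p s * SCNS x q r - gCNS r0 L0 x q s * SCNS x p r

lemma PCNS_eq (r0 L0 : ℝ) (x : Fin 4 → ℝ) (p q r s : Fin 4) :
    PCNS r0 L0 x p q r s = RCNS r0 L0 x p q r s + (1 / 3) * Wt r0 L0 x p q r s := rfl

lemma bfac01 (p q : Fin 4) :
    (if p = 0 ∧ q = 1 then (1:ℝ) else if p = 1 ∧ q = 0 then -1 else 0)
      = kd p 0 * kd q 1 - kd p 1 * kd q 0 := by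
  fin_cases p <;> fin_cases q <;> simp [kd] <;> decide

lemma bfac23 (p q : Fin 4) :
    (if p = 2 ∧ q = 3 then (1:ℝ) else if p = 3 ∧ q = 2 then -1 else 0)
      = kd p 2 * kd q 3 - kd p 3 * kd q 2 := by
  fin_cases p <;> fin_cases q <;> simp [kd] <;> decide

lemma RCNS_eq (r0 L0 : ℝ) (x : Fin 4 → ℝ) (p q r s : Fin 4) :
    RCNS r0 L0 x p q r s
      = (r0 ^ 2 / L0) * Real.sin (x 1) ^ 2
          * ((kd p 0 * kd q 1 - kd p 1 * kd q 0) * (kd r 0 * kd s 1 - kd r 1 * kd s 0))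
        + (-(r0 ^ 2) * Real.sin (x 2) ^ 2)
          * ((kd p 2 * kd q 3 - kd p 3 * kd q 2) * (kd r 2 * kd s 3 - kd r 3 * kd s 2)) := by
  simp only [RCNS, blk, bfac01, bfac23]

lemma gCNS_eq (r0 L0 : ℝ) (x : Fin 4 → ℝ) (p q : Fin 4) :
    gCNS r0 L0 x p q
      = -(r0 ^ 2 / L0) * Real.sin (x 1) ^ 2 * (kd p 0 * kd q 0)
        + (r0 ^ 2 / L0) * (kd p 1 * kd q 1) + r0 ^ 2 * (kd p 2 * kd q 2)
        + r0 ^ 2 * Real.sin (x 2) ^ 2 * (kd p 3 * kd q 3) := by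
  fin_cases p <;> fin_cases q <;> simp [gCNS, kd] <;> decide

lemma SCNS_eq (x : Fin 4 → ℝ) (p q : Fin 4) :
    SCNS x p q
      = Real.sin (x 1) ^ 2 * (kd p 0 * kd q 0) - (kd p 1 * kd q 1) - (kd p 2 * kd q 2)
        - Real.sin (x 2) ^ 2 * (kd p 3 * kd q 3) := by
  fin_cases p <;> fin_cases q <;> simp [SCNS, kd] <;> decide

lemma ginv00 (r0 L0 : ℝ) (x : Fin 4 → ℝ) : ginv (gCNS r0 L0) x 0 0 = (-(r0 ^ 2 / L0) * Real.sin (x 1) ^ 2)⁻¹ := by simp [ginv, gCNS] <;> decide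
lemma ginv01 (r0 L0 : ℝ) (x : Fin 4 → ℝ) : ginv (gCNS r0 L0) x 0 1 = 0 := by simp [ginv, gCNS] <;> decide
lemma ginv02 (r0 L0 : ℝ) (x : Fin 4 → ℝ) : ginv (gCNS r0 L0) x 0 2 = 0 := by simp [ginv, gCNS] <;> decide
lemma ginv03 (r0 L0 : ℝ) (x : Fin 4 → ℝ) : ginv (gCNS r0 L0) x 0 3 = 0 := by simp [ginv, gCNS] <;> decide
lemma ginv10 (r0 L0 : ℝ) (x : Fin 4 → ℝ) : ginv (gCNS r0 L0) x 1 0 = 0 := by simp [ginv, gCNS] <;> decide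
lemma ginv11 (r0 L0 : ℝ) (x : Fin 4 → ℝ) : ginv (gCNS r0 L0) x 1 1 = (r0 ^ 2 / L0)⁻¹ := by simp [ginv, gCNS] <;> decide
lemma ginv12 (r0 L0 : ℝ) (x : Fin 4 → ℝ) : ginv (gCNS r0 L0) x 1 2 = 0 := by simp [ginv, gCNS] <;> decide
lemma ginv13 (r0 L0 : ℝ) (x : Fin 4 → ℝ) : ginv (gCNS r0 L0) x 1 3 = 0 := by simp [ginv, gCNS] <;> decide
lemma ginv20 (r0 L0 : ℝ) (x : Fin 4 → ℝ) : ginv (gCNS r0 L0) x 2 0 = 0 := by simp [ginv, gCNS] <;> decide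
lemma ginv21 (r0 L0 : ℝ) (x : Fin 4 → ℝ) : ginv (gCNS r0 L0) x 2 1 = 0 := by simp [ginv, gCNS] <;> decide
lemma ginv22 (r0 L0 : ℝ) (x : Fin 4 → ℝ) : ginv (gCNS r0 L0) x 2 2 = (r0 ^ 2)⁻¹ := by simp [ginv, gCNS] <;> decide
lemma ginv23 (r0 L0 : ℝ) (x : Fin 4 → ℝ) : ginv (gCNS r0 L0) x 2 3 = 0 := by simp [ginv, gCNS] <;> decide
lemma ginv30 (r0 L0 : ℝ) (x : Fin 4 → ℝ) : ginv (gCNS r0 L0) x 3 0 = 0 := by simp [ginv, gCNS] <;> decide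
lemma ginv31 (r0 L0 : ℝ) (x : Fin 4 → ℝ) : ginv (gCNS r0 L0) x 3 1 = 0 := by simp [ginv, gCNS] <;> decide
lemma ginv32 (r0 L0 : ℝ) (x : Fin 4 → ℝ) : ginv (gCNS r0 L0) x 3 2 = 0 := by simp [ginv, gCNS] <;> decide
lemma ginv33 (r0 L0 : ℝ) (x : Fin 4 → ℝ) : ginv (gCNS r0 L0) x 3 3 = (r0 ^ 2 * Real.sin (x 2) ^ 2)⁻¹ := by simp [ginv, gCNS] <;> decide

lemma lemC (r0 L0 : ℝ) (x : Fin 4 → ℝ) (p q r s u v : Fin 4) :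
    dot4 (gCNS r0 L0) (PCNS r0 L0) (RCNS r0 L0) x p q r s u v
      = dot4 (gCNS r0 L0) (RCNS r0 L0) (RCNS r0 L0) x p q r s u v
        + (1 / 3) * dot4 (gCNS r0 L0) (Wt r0 L0) (RCNS r0 L0) x p q r s u v := by
  simp only [dot4, PCNS_eq, Fin.sum_univ_four]
  ring

set_option maxHeartbeats 4000000 in
lemma lemA (r0 L0 : ℝ) (hr : r0 ≠ 0) (hL : L0 ≠ 0) (x : Fin 4 → ℝ)
    (hsr : Real.sin (x 1) ≠ 0) (hst : Real.sin (x 2) ≠ 0) (p q r s u v : Fin 4) :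
    dot4 (gCNS r0 L0) (RCNS r0 L0) (RCNS r0 L0) x p q r s u v = 0 := by
  simp only [dot4, RCNS_eq, ginv00, ginv01, ginv02, ginv03, ginv10, ginv11, ginv12, ginv13, ginv20, ginv21, ginv22, ginv23, ginv30, ginv31, ginv32, ginv33, Fin.sum_univ_four, Fin.reduceEq,
    kd00, kd01, kd02, kd03, kd10, kd11, kd12, kd13, kd20, kd21, kd22, kd23, kd30, kd31, kd32, kd33,
    and_true, and_false, true_and, false_and, if_true, if_false, ite_true, ite_false,
    mul_zero, zero_mul, mul_one, one_mul, add_zero, zero_add, sub_zero, zero_sub,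
    neg_zero, inv_zero, reduceIte]
  field_simp
  ring

set_option maxHeartbeats 8000000 in
lemma lemB (r0 L0 : ℝ) (hr : r0 ≠ 0) (hL : L0 ≠ 0) (x : Fin 4 → ℝ)
    (hsr : Real.sin (x 1) ≠ 0) (hst : Real.sin (x 2) ≠ 0) (p q r s u v : Fin 4) :
    dot4 (gCNS r0 L0) (Wt r0 L0) (RCNS r0 L0) x p q r s u v
      = -Qop (SCNS x) (RCNS r0 L0 x) p q r s u v := by
  simp only [dot4, Qop, Wt, RCNS_eq, gCNS_eq, SCNS_eq, ginv00, ginv01, ginv02, ginv03, ginv10, ginv11, ginv12, ginv13, ginv20, ginv21, ginv22, ginv23, ginv30, ginv31, ginv32, ginv33, Fin.sum_univ_four,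
    Fin.reduceEq, kd00, kd01, kd02, kd03, kd10, kd11, kd12, kd13, kd20, kd21, kd22, kd23, kd30, kd31, kd32, kd33,
    and_true, and_false, true_and, false_and, if_true, if_false, ite_true, ite_false,
    mul_zero, zero_mul, mul_one, one_mul, add_zero, zero_add, sub_zero, zero_sub,
    neg_zero, inv_zero, reduceIte]
  field_simp
  ring

/-- The charged Nariai spacetime is Ricci generalized projectively
pseudosymmetric: `P·R = -(1/3) Q(S,R)`. -/
theorem cns_projective_pseudosymmetric (r0 L0 : ℝ) (hr0 : 0 < r0) (hL0 : 0 < L0)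
    (hL1 : L0 ≤ 1) (x : Fin 4 → ℝ) (hx : CNSdom x) (p q r s u v : Fin 4) :
    dot4 (gCNS r0 L0) (PCNS r0 L0) (RCNS r0 L0) x p q r s u v
      = -(1 / 3) * Qop (SCNS x) (RCNS r0 L0 x) p q r s u v := by
  obtain ⟨h1, h2, h3, h4⟩ := hx
  have hsr : Real.sin (x 1) ≠ 0 := ne_of_gt (Real.sin_pos_of_pos_of_lt_pi h1 h2)
  have hst : Real.sin (x 2) ≠ 0 := ne_of_gt (Real.sin_pos_of_pos_of_lt_pi h3 h4)
  have hr : r0 ≠ 0 := ne_of_gt hr0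
  have hL : L0 ≠ 0 := ne_of_gt hL0
  rw [lemC, lemA r0 L0 hr hL x hsr hst, lemB r0 L0 hr hL x hsr hst]
  ring
end
end

section
/- The energy-momentum tensor of the charged Nariai spacetime is covariantly constant: for T = (c⁴/(8πG))(S − (κ/2 − Λ)g) with cosmological constant Λ = (1+L₀)/(2r₀²) and positive constants c, G, one has ∇T = 0. In particular T's nonzero components are T₁₁ = −(c⁴/(16πG L₀))(3+L₀)sin²r, T₂₂ = (c⁴/(16πG L₀))(3+L₀), T₃₃ = (c⁴/(16πG))(1+3L₀), T₄₄ = (c⁴/(16πG))(1+3L₀)sin²θ. -/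
noncomputable section

open Real

/-- The energy-momentum tensor `T = (c⁴/(8πG))(S - (κ/2 - Λ)g)` of the charged Nariai
spacetime, with cosmological constant `Λ = (1+L₀)/(2r₀²)`. -/
def TCNS (r0 L0 c G : ℝ) (x : Fin 4 → ℝ) : Fin 4 → Fin 4 → ℝ := fun p q =>
  (c ^ 4 / (8 * Real.pi * G)) *
    (SCNS x p q - (κCNS r0 L0 / 2 - (1 + L0) / (2 * r0 ^ 2)) * gCNS r0 L0 x p q)


set_option maxHeartbeats 2000000 in
theorem pd_const' (i : Fin 4) (C : ℝ) (x : Fin 4 → ℝ) : pd i (fun _ => C) x = 0 := by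
  simp [pd]

theorem pd_sin_sq (A : ℝ) (i j : Fin 4) (x : Fin 4 → ℝ) :
    pd i (fun y => A * Real.sin (y j) ^ 2) x =
      if i = j then A * (2 * Real.sin (x j) * Real.cos (x j)) else 0 := by
  unfold pd
  rcases eq_or_ne i j with h | h
  · subst h
    rw [if_pos rfl]
    simp only [Function.update_self]
    have h1 : HasDerivAt (fun s : ℝ => A * Real.sin s ^ 2)
        (A * (2 * Real.sin (x i) ^ 1 * Real.cos (x i))) (x i) :=
      ((Real.hasDerivAt_sin (x i)).pow 2).const_mul A
    simpa using h1.deriv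
  · rw [if_neg h]
    have h2 : (fun s => A * Real.sin ((Function.update x i s) j) ^ 2)
        = fun _ => A * Real.sin (x j) ^ 2 := by
      funext s; rw [Function.update_of_ne (Ne.symm h)]
    rw [h2]; simp

theorem pd_neg_sin_sq (A : ℝ) (i j : Fin 4) (x : Fin 4 → ℝ) :
    pd i (fun y => -(A * Real.sin (y j) ^ 2)) x =
      if i = j then -(A * (2 * Real.sin (x j) * Real.cos (x j))) else 0 := by
  have h : (fun y : Fin 4 → ℝ => -(A * Real.sin (y j) ^ 2))
      = fun y => (-A) * Real.sin (y j) ^ 2 := by funext y; ring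
  rw [h, pd_sin_sq]
  split <;> ring

set_option maxHeartbeats 2000000 in
theorem pd_g (r0 L0 : ℝ) (i p q : Fin 4) (x : Fin 4 → ℝ) :
    pd i (fun y => gCNS r0 L0 y p q) x =
      if p = 0 ∧ q = 0 ∧ i = 1 then
        -(r0 ^ 2 / L0) * (2 * Real.sin (x 1) * Real.cos (x 1))
      else if p = 3 ∧ q = 3 ∧ i = 2 then
        r0 ^ 2 * (2 * Real.sin (x 2) * Real.cos (x 2))
      else 0 := by
  fin_cases p <;> fin_cases q <;>
    simp [gCNS, pd_sin_sq, pd_neg_sin_sq, pd_const']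

theorem ChrCNS (r0 L0 : ℝ) (hr0 : r0 ≠ 0) (hL0 : L0 ≠ 0) (x : Fin 4 → ℝ)
    (h1 : Real.sin (x 1) ≠ 0) (h2 : Real.sin (x 2) ≠ 0) (a b c : Fin 4) :
    Chr (gCNS r0 L0) x a b c =
      if a = 0 ∧ ((b = 0 ∧ c = 1) ∨ (b = 1 ∧ c = 0)) then Real.cos (x 1) / Real.sin (x 1)
      else if a = 1 ∧ b = 0 ∧ c = 0 then Real.sin (x 1) * Real.cos (x 1)
      else if a = 2 ∧ b = 3 ∧ c = 3 then -(Real.sin (x 2) * Real.cos (x 2))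
      else if a = 3 ∧ ((b = 2 ∧ c = 3) ∨ (b = 3 ∧ c = 2)) then Real.cos (x 2) / Real.sin (x 2)
      else 0 := by
  rw [Chr, Fin.sum_univ_four]
  simp only [pd_g]
  fin_cases a <;> fin_cases b <;> fin_cases c <;>
    simp [ginv, gCNS] <;> field_simp <;> ring

set_option maxHeartbeats 2000000 in
theorem TCNS_eval (r0 L0 c G : ℝ) (hr0 : r0 ≠ 0) (hL0 : L0 ≠ 0) (hG : G ≠ 0)
    (y : Fin 4 → ℝ) (p q : Fin 4) :
    TCNS r0 L0 c G y p q =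
      if p = 0 ∧ q = 0 then -(c ^ 4 / (16 * Real.pi * G * L0)) * (3 + L0) * Real.sin (y 1) ^ 2
      else if p = 1 ∧ q = 1 then c ^ 4 / (16 * Real.pi * G * L0) * (3 + L0)
      else if p = 2 ∧ q = 2 then c ^ 4 / (16 * Real.pi * G) * (1 + 3 * L0)
      else if p = 3 ∧ q = 3 then c ^ 4 / (16 * Real.pi * G) * (1 + 3 * L0) * Real.sin (y 2) ^ 2
      else 0 := by
  have hpi : Real.pi ≠ 0 := Real.pi_ne_zero
  fin_cases p <;> fin_cases q <;>
    simp [TCNS, SCNS, gCNS, κCNS] <;> field_simp <;> ring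

set_option maxHeartbeats 2000000 in
theorem pd_T (r0 L0 c G : ℝ) (hr0 : r0 ≠ 0) (hL0 : L0 ≠ 0) (hG : G ≠ 0)
    (i p q : Fin 4) (x : Fin 4 → ℝ) :
    pd i (fun y => TCNS r0 L0 c G y p q) x =
      if p = 0 ∧ q = 0 ∧ i = 1 then
        -(c ^ 4 / (16 * Real.pi * G * L0)) * (3 + L0) *
          (2 * Real.sin (x 1) * Real.cos (x 1))
      else if p = 3 ∧ q = 3 ∧ i = 2 then
        c ^ 4 / (16 * Real.pi * G) * (1 + 3 * L0) *
          (2 * Real.sin (x 2) * Real.cos (x 2))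
      else 0 := by
  simp only [TCNS_eval r0 L0 c G hr0 hL0 hG]
  fin_cases p <;> fin_cases q <;>
    simp [pd_sin_sq, pd_neg_sin_sq, pd_const'] <;> ring

set_option maxHeartbeats 4000000

/-- The energy-momentum tensor of the charged Nariai spacetime is
covariantly constant, `∇T = 0`; in particular its nonzero components are
`T₁₁ = -(c⁴/(16πGL₀))(3+L₀)sin²r`, `T₂₂ = (c⁴/(16πGL₀))(3+L₀)`,
`T₃₃ = (c⁴/(16πG))(1+3L₀)`, `T₄₄ = (c⁴/(16πG))(1+3L₀)sin²θ`. -/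
theorem cns_energy_momentum_parallel (r0 L0 c G : ℝ) (hr0 : 0 < r0) (hL0 : 0 < L0)
    (hL1 : L0 ≤ 1) (hc : 0 < c) (hG : 0 < G) (x : Fin 4 → ℝ) (hx : CNSdom x) :
    (∀ a p q : Fin 4, covDeriv2 (gCNS r0 L0) (TCNS r0 L0 c G) x a p q = 0) ∧
    (∀ p q : Fin 4, TCNS r0 L0 c G x p q =
      if p = 0 ∧ q = 0 then -(c ^ 4 / (16 * Real.pi * G * L0)) * (3 + L0) * Real.sin (x 1) ^ 2
      else if p = 1 ∧ q = 1 then c ^ 4 / (16 * Real.pi * G * L0) * (3 + L0)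
      else if p = 2 ∧ q = 2 then c ^ 4 / (16 * Real.pi * G) * (1 + 3 * L0)
      else if p = 3 ∧ q = 3 then c ^ 4 / (16 * Real.pi * G) * (1 + 3 * L0) * Real.sin (x 2) ^ 2
      else 0) := by
  constructor
  · have hr0' : r0 ≠ 0 := ne_of_gt hr0
    have hL0' : L0 ≠ 0 := ne_of_gt hL0
    have hG' : G ≠ 0 := ne_of_gt hG
    have h1 : Real.sin (x 1) ≠ 0 :=
      ne_of_gt (Real.sin_pos_of_pos_of_lt_pi hx.1 hx.2.1)
    have h2 : Real.sin (x 2) ≠ 0 :=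
      ne_of_gt (Real.sin_pos_of_pos_of_lt_pi hx.2.2.1 hx.2.2.2)
    intro a p q
    rw [covDeriv2, Fin.sum_univ_four, Fin.sum_univ_four]
    simp only [pd_T r0 L0 c G hr0' hL0' hG']
    fin_cases a <;> fin_cases p <;> fin_cases q <;>
      simp only [ChrCNS r0 L0 hr0' hL0' x h1 h2,
        TCNS_eval r0 L0 c G hr0' hL0' hG'] <;>
      simp <;> (try field_simp) <;> (try ring)
  · intro p q
    exact TCNS_eval r0 L0 c G (ne_of_gt hr0) (ne_of_gt hL0) (ne_of_gt hG) x p q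
end
end
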